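/- Suppose two cubic coefficient tensors F and F̃ (each symmetric in their lower indices) are related by the full equivalence transformation F^i_{mnp} = Σ F̃^ĩ_{m̃ñp̃} S^i_ĩ[1] T^m̃_m[2] T^ñ_n[2] T^p̃_p[2], where S[1] and T[2] are invertible 2×2 matrices. Then each of the six determinants G_{abcd}(F) equals det(S[1]) times the corresponding right-composition determinant; in particular G_{1111}(F) = det(S[1]) · det(T[2]) · ω̃[1](T¹₁[2], T²₁[2]), where ω̃[1] is the binary quartic form built from the determinants of F̃. -/
import Mathlib


/-- A cubic coefficient array on ℝ²: one upper index, three lower indices in {1,2}. -/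
abbrev CubicTensor := Fin 2 → Fin 2 → Fin 2 → Fin 2 → ℝ

/-- Symmetry in the three lower indices. -/
def SymLower (F : CubicTensor) : Prop :=
  ∀ i m n p, F i m n p = F i n m p ∧ F i m n p = F i m p n

def G1111 (F : CubicTensor) : ℝ := F 0 0 0 0 * F 1 0 0 1 - F 0 0 0 1 * F 1 0 0 0
def G1112 (F : CubicTensor) : ℝ := F 0 0 0 0 * F 1 0 1 1 - F 0 0 1 1 * F 1 0 0 0
def G1122 (F : CubicTensor) : ℝ := F 0 0 0 0 * F 1 1 1 1 - F 0 1 1 1 * F 1 0 0 0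
def G1212 (F : CubicTensor) : ℝ := F 0 0 0 1 * F 1 0 1 1 - F 0 0 1 1 * F 1 0 0 1
def G1222 (F : CubicTensor) : ℝ := F 0 0 0 1 * F 1 1 1 1 - F 0 1 1 1 * F 1 0 0 1
def G2222 (F : CubicTensor) : ℝ := F 0 0 1 1 * F 1 1 1 1 - F 0 1 1 1 * F 1 0 1 1
/-- The binary quartic form ω[1] associated with F. -/
def omega1 (F : CubicTensor) (u v : ℝ) : ℝ :=
  G1111 F * u^4 + 2 * G1112 F * u^3 * v + (3 * G1212 F + G1122 F) * u^2 * v^2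
    + 2 * G1222 F * u * v^3 + G2222 F * v^4

theorem full_equivalence_determinants (F Ft Fr : CubicTensor)
    (S1 T2 : Matrix (Fin 2) (Fin 2) ℝ)
    (hF : SymLower F) (hFt : SymLower Ft)
    (hS1 : IsUnit S1.det) (hT2 : IsUnit T2.det)
    (hrel : ∀ i m n p, F i m n p =
      ∑ it : Fin 2, ∑ mt : Fin 2, ∑ nt : Fin 2, ∑ pt : Fin 2,
        Ft it mt nt pt * S1 i it * T2 mt m * T2 nt n * T2 pt p)
    (hFr : ∀ i m n p, Fr i m n p =
      ∑ mt : Fin 2, ∑ nt : Fin 2, ∑ pt : Fin 2,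
        Ft i mt nt pt * T2 mt m * T2 nt n * T2 pt p) :
    G1111 F = S1.det * G1111 Fr ∧ G1112 F = S1.det * G1112 Fr ∧
    G1122 F = S1.det * G1122 Fr ∧ G1212 F = S1.det * G1212 Fr ∧
    G1222 F = S1.det * G1222 Fr ∧ G2222 F = S1.det * G2222 Fr ∧
    G1111 F = S1.det * T2.det * omega1 Ft (T2 0 0) (T2 1 0) := by
  have h1 : ∀ i : Fin 2, Ft i 0 1 0 = Ft i 0 0 1 := fun i => (hFt i 0 1 0).2
  have h2 : ∀ i : Fin 2, Ft i 1 0 0 = Ft i 0 0 1 := fun i => ((hFt i 1 0 0).1).trans (h1 i)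
  have h3 : ∀ i : Fin 2, Ft i 1 0 1 = Ft i 0 1 1 := fun i => (hFt i 1 0 1).1
  have h4 : ∀ i : Fin 2, Ft i 1 1 0 = Ft i 0 1 1 := fun i => ((hFt i 1 1 0).2).trans (h3 i)
  simp only [G1111, G1112, G1122, G1212, G1222, G2222, omega1, hrel, hFr,
    Fin.sum_univ_two, Matrix.det_fin_two, h1, h2, h3, h4]
  refine ⟨by ring, by ring, by ring, by ring, by ring, by ring, by ring⟩
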